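/- Let M be an R-module, N a finitely generated R-module, and α a nonzero element of M ⊗_R N. Then there exists a finitely embedded quotient module L of M such that the image of α under the natural map M ⊗_R N → L ⊗_R N is nonzero. -/

import Mathlib

universe u

/-- A linear map is a pure monomorphism if it is injective and remains injective after
tensoring with every `R`-module. -/
def IsPureMono (R : Type u) [CommRing R] {M N : Type u} [AddCommGroup M] [Module R M]
    [AddCommGroup N] [Module R N] (f : M →ₗ[R] N) : Prop :=
  Function.Injective f ∧
    ∀ (L : Type u) [AddCommGroup L] [Module R L], Function.Injective (LinearMap.rTensor L f)

/-- A module `D` is pure injective if every homomorphism into `D` extends along every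
pure monomorphism. -/
def IsPureInjective (R : Type u) [CommRing R] (D : Type u) [AddCommGroup D] [Module R D] :
    Prop :=
  ∀ (M N : Type u) [AddCommGroup M] [Module R M] [AddCommGroup N] [Module R N]
    (f : M →ₗ[R] N), IsPureMono R f → ∀ g : M →ₗ[R] D, ∃ h : N →ₗ[R] D, h ∘ₗ f = g

/-- A module is finitely embedded if it embeds into the injective envelope of a direct sum
of finitely many simple modules, i.e. into an injective module which is an essential
extension of a finitely generated semisimple submodule. -/
def FinitelyEmbedded (R : Type u) [CommRing R] (M : Type u) [AddCommGroup M] [Module R M] :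
    Prop :=
  ∃ E : ModuleCat.{u} R, Module.Injective R E ∧
    ∃ S : Submodule R E, IsSemisimpleModule R S ∧ S.FG ∧
      (∀ P : Submodule R E, P ≠ ⊥ → S ⊓ P ≠ ⊥) ∧
      ∃ f : M →ₗ[R] E, Function.Injective f

universe v

/-! Choose a maximal ideal `𝔪` containing the annihilator of `α`. The map `R ∙ α → R ⧸ 𝔪`
sending `α` to `1` extends to `h : M ⊗ N → E`, where `E` is an injective hull of `R ⧸ 𝔪`, and
`h α ≠ 0`. With `K` the kernel of the adjoint `M → Hom(N, E)` of `h`, the map `h` factors through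
`(M ⧸ K) ⊗ N`, so `α` survives there; and `M ⧸ K` embeds into `Hom(N, E)`, hence into `Eⁿ` for
`n` generators of `N`, which is an injective hull of the finitely generated semisimple
module `(R ⧸ 𝔪)ⁿ`. -/

open LinearMap TensorProduct

namespace Submodule

variable {R M : Type*} [Ring R] [AddCommGroup M] [Module R M]

def IsEssentialIn (A B : Submodule R M) : Prop :=
  ∀ y ∈ B, y ≠ 0 → ∃ r : R, r • y ≠ 0 ∧ r • y ∈ A

variable {A A' B C : Submodule R M}

theorem IsEssentialIn.refl (A : Submodule R M) : A.IsEssentialIn A :=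
  fun y hy hy0 => ⟨1, by rwa [one_smul], by rwa [one_smul]⟩

theorem IsEssentialIn.trans (hAB : A.IsEssentialIn B) (hBC : B.IsEssentialIn C) :
    A.IsEssentialIn C := by
  intro y hy hy0
  obtain ⟨r, hr0, hrB⟩ := hBC y hy hy0
  obtain ⟨s, hs0, hsA⟩ := hAB _ hrB hr0
  exact ⟨s * r, by rwa [mul_smul], by rwa [mul_smul]⟩

theorem IsEssentialIn.mono (hAA' : A ≤ A') (h : A.IsEssentialIn B) : A'.IsEssentialIn B :=
  fun y hy hy0 => (h y hy hy0).imp fun _ ⟨hr0, hrA⟩ => ⟨hr0, hAA' hrA⟩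

theorem isEssentialIn_sSup {c : Set (Submodule R M)} (hne : c.Nonempty)
    (hc : DirectedOn (· ≤ ·) c) (h : ∀ B ∈ c, A.IsEssentialIn B) : A.IsEssentialIn (sSup c) := by
  intro y hy hy0
  obtain ⟨B, hBc, hyB⟩ := (mem_sSup_of_directed hne hc).mp hy
  exact h B hBc y hyB hy0

theorem isEssentialIn_top_iff : A.IsEssentialIn ⊤ ↔ ∀ P : Submodule R M, P ≠ ⊥ → A ⊓ P ≠ ⊥ := by
  refine ⟨fun h P hP => ?_, fun h y _ hy0 => ?_⟩
  · obtain ⟨y, hyP, hy0⟩ := (Submodule.ne_bot_iff P).mp hP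
    obtain ⟨r, hr0, hrA⟩ := h y trivial hy0
    exact (Submodule.ne_bot_iff _).mpr ⟨r • y, mem_inf.mpr ⟨hrA, P.smul_mem r hyP⟩, hr0⟩
  · have hy : (R ∙ y) ≠ ⊥ := by rwa [Ne, span_singleton_eq_bot]
    obtain ⟨z, hz, hz0⟩ := (Submodule.ne_bot_iff _).mp (h (R ∙ y) hy)
    obtain ⟨hzA, hzy⟩ := mem_inf.mp hz
    obtain ⟨r, rfl⟩ := mem_span_singleton.mp hzy
    exact ⟨r, hz0, hzA⟩

theorem isEssentialIn_top_pi {ι : Type*} [Finite ι] {M : ι → Type*} [∀ i, AddCommGroup (M i)]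
    [∀ i, Module R (M i)] {S : ∀ i, Submodule R (M i)} (h : ∀ i, (S i).IsEssentialIn ⊤) :
    (pi Set.univ S).IsEssentialIn ⊤ := by
  classical
  have hcoord (a : ι) (z : ∀ i, M i) (hz : z ≠ 0) : ∃ s : R, s • z ≠ 0 ∧ (s • z) a ∈ S a := by
    by_cases hza : z a = 0
    · exact ⟨1, by rwa [one_smul], by simp [hza]⟩
    · obtain ⟨s, hs0, hsS⟩ := h a (z a) trivial hza
      exact ⟨s, fun hsz => hs0 (congrFun hsz a), hsS⟩
  have key (t : Finset ι) :
      ∀ z : ∀ i, M i, z ≠ 0 → ∃ r : R, r • z ≠ 0 ∧ ∀ i ∈ t, (r • z) i ∈ S i := by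
    induction t using Finset.induction_on with
    | empty => exact fun z hz => ⟨1, by rwa [one_smul], by simp⟩
    | insert a t _ ih =>
      intro z hz
      obtain ⟨s, hs0, hsS⟩ := hcoord a z hz
      obtain ⟨r, hr0, hrS⟩ := ih (s • z) hs0
      refine ⟨r * s, by rwa [mul_smul], fun i hi => ?_⟩
      rw [mul_smul]
      rcases Finset.mem_insert.mp hi with rfl | hit
      · exact (S i).smul_mem r hsS
      · exact hrS i hit
  have := Fintype.ofFinite ι
  intro y _ hy0
  obtain ⟨r, hr0, hrS⟩ := key Finset.univ y hy0
  exact ⟨r, hr0, fun i _ => hrS i (Finset.mem_univ i)⟩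

end Submodule

open Submodule

section InjectiveHull

variable {R : Type u} [Ring R]

theorem Module.Injective.of_retraction {P Q : Type v} [AddCommGroup P] [Module R P]
    [AddCommGroup Q] [Module R Q] [Module.Injective R Q] (s : P →ₗ[R] Q) (p : Q →ₗ[R] P)
    (hps : p ∘ₗ s = LinearMap.id) : Module.Injective R P :=
  ⟨fun _ _ _ _ _ _ f hf g => by
    obtain ⟨h, hh⟩ := Module.Injective.out f hf (s ∘ₗ g)
    exact ⟨p ∘ₗ h, fun x => by simpa [hh] using LinearMap.congr_fun hps (g x)⟩⟩

variable {I : Type v} [AddCommGroup I] [Module R I]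

theorem Module.Injective.exists_projection_of_disjoint [Module.Injective R I]
    {E C : Submodule R I} (h : Disjoint E C) :
    ∃ π : I →ₗ[R] I, (∀ x ∈ E, π x = x) ∧ ∀ x ∈ C, π x = 0 := by
  have hinj : Function.Injective (E.subtype.coprod C.subtype) := by
    rw [← ker_eq_bot, ker_coprod_of_disjoint_range _ _ (by simpa using h)]
    simp
  obtain ⟨π, hπ⟩ := Module.Injective.out _ hinj (E.subtype ∘ₗ LinearMap.fst R E C)
  exact ⟨π, fun x hx => by simpa using hπ (⟨x, hx⟩, 0),
    fun x hx => by simpa using hπ (0, ⟨x, hx⟩)⟩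

theorem isEssentialIn_range_of_maximal_disjoint {E C : Submodule R I}
    (hC : Maximal (fun C => Disjoint C E) C) {π : I →ₗ[R] I} (hπE : ∀ x ∈ E, π x = x)
    (hπC : ∀ x ∈ C, π x = 0) : E.IsEssentialIn (range π) := by
  rintro _ ⟨y, rfl⟩ hy0
  have hyC : y ∉ C := fun hy => hy0 (hπC y hy)
  have hnd : ¬Disjoint ((R ∙ y) ⊔ C) E := fun hd =>
    hyC (hC.le_of_ge hd le_sup_right (mem_sup_left (mem_span_singleton_self y)))
  obtain ⟨z, hzyC, hzE, hz0⟩ : ∃ z ∈ (R ∙ y) ⊔ C, z ∈ E ∧ z ≠ 0 := by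
    simpa [disjoint_def] using hnd
  obtain ⟨_, hry, c, hc, rfl⟩ := mem_sup.mp hzyC
  obtain ⟨r, rfl⟩ := mem_span_singleton.mp hry
  have hπz : r • π y = r • y + c := by
    rw [← hπE _ hzE, map_add, hπC c hc, add_zero, map_smul]
  exact ⟨r, hπz ▸ hz0, hπz ▸ hzE⟩

theorem Module.Injective.exists_isEssentialIn_injective [Module.Injective R I]
    (X : Submodule R I) :
    ∃ E : Submodule R I, X ≤ E ∧ X.IsEssentialIn E ∧ Module.Injective R E := by
  -- `E` is a maximal essential extension of `X` inside `I` and `C` a maximal complement of `E`;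
  -- extending the projection `E ⊕ C → E` to `π : I → I` exhibits `E` as a retract of `I`.
  obtain ⟨E, -, hE⟩ := zorn_le_nonempty₀ {E | X ≤ E ∧ X.IsEssentialIn E}
    (fun c hcE hc B hB => ⟨sSup c, ⟨(hcE hB).1.trans (le_sSup hB),
      isEssentialIn_sSup ⟨B, hB⟩ hc.directedOn fun B' hB' => (hcE hB').2⟩, fun _ => le_sSup⟩)
    X ⟨le_rfl, .refl X⟩
  obtain ⟨C, -, hC⟩ := zorn_le_nonempty₀ {C | Disjoint C E}
    (fun c hcD hc B hB => ⟨sSup c, hc.directedOn.disjoint_sSup_left.mpr fun B' hB' => hcD hB',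
      fun _ => le_sSup⟩)
    ⊥ disjoint_bot_left
  obtain ⟨π, hπE, hπC⟩ := exists_projection_of_disjoint hC.prop.symm
  have hEπ : E ≤ range π := fun x hx => ⟨x, hπE x hx⟩
  -- `range π` is an essential extension of `X` containing `E`, so maximality of `E` applies
  have hπE' : range π = E := le_antisymm (hE.le_of_ge ⟨hE.prop.1.trans hEπ,
    hE.prop.2.trans (isEssentialIn_range_of_maximal_disjoint hC hπE hπC)⟩ hEπ) hEπ
  refine ⟨E, hE.prop.1, hE.prop.2,
    .of_retraction E.subtype (π.codRestrict E fun x => hπE' ▸ mem_range_self π x) ?_⟩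
  ext x
  simp [hπE x x.2]

theorem Module.exists_injective_embedding [Small.{v} R] (X : Type v) [AddCommGroup X]
    [Module R X] : ∃ I : ModuleCat.{v} R, Module.Injective R I ∧
      ∃ e : X →ₗ[R] I, Function.Injective e := by
  let I := CategoryTheory.Injective.under (ModuleCat.of R X)
  have : CategoryTheory.Injective (ModuleCat.of R I) :=
    inferInstanceAs (CategoryTheory.Injective I)
  exact ⟨I, Module.injective_module_of_injective_object R I,
    (CategoryTheory.Injective.ι (ModuleCat.of R X)).hom,
    (ModuleCat.mono_iff_injective _).mp inferInstance⟩

theorem exists_injective_essential_extension [Small.{v} R] (X : Type v) [AddCommGroup X]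
    [Module R X] : ∃ E : ModuleCat.{v} R, Module.Injective R E ∧
      ∃ j : X →ₗ[R] E, Function.Injective j ∧ (range j).IsEssentialIn ⊤ := by
  obtain ⟨I, hI, e, he⟩ := Module.exists_injective_embedding (R := R) X
  obtain ⟨E, hXE, hess, hE⟩ := hI.exists_isEssentialIn_injective (range e)
  refine ⟨.of R E, hE, e.codRestrict E fun x => hXE (mem_range_self e x),
    fun x y hxy => he (congrArg Subtype.val hxy), ?_⟩
  rintro y - hy0
  obtain ⟨r, hr0, x, hx⟩ := hess y y.2 (by simpa using hy0)
  exact ⟨r, fun h => hr0 (by simpa using congrArg Subtype.val h), x, Subtype.ext hx⟩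

theorem exists_linearMap_apply_ne_zero {T E : Type v} [AddCommGroup T] [Module R T]
    [AddCommGroup E] [Module R E] [Module.Injective R E] {x : T} {𝔪 : Ideal R}
    (hx : Ideal.torsionOf R T x ≤ 𝔪) (h𝔪 : 𝔪 ≠ ⊤) {j : R ⧸ 𝔪 →ₗ[R] E}
    (hj : Function.Injective j) : ∃ h : T →ₗ[R] E, h x ≠ 0 := by
  let φ : (R ∙ x) →ₗ[R] R ⧸ 𝔪 :=
    factor hx ∘ₗ (Ideal.quotTorsionOfEquivSpanSingleton R T x).symm.toLinearMap
  have hφ : φ ⟨x, mem_span_singleton_self x⟩ = Submodule.Quotient.mk 1 := by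
    have : (Ideal.quotTorsionOfEquivSpanSingleton R T x).symm ⟨x, mem_span_singleton_self x⟩ =
        Submodule.Quotient.mk 1 := by
      rw [LinearEquiv.symm_apply_eq]
      ext
      simp [Ideal.quotTorsionOfEquivSpanSingleton_apply_mk]
    simp [φ, this]
  obtain ⟨h, hh⟩ := Module.Injective.out (R ∙ x).subtype (injective_subtype _) (j ∘ₗ φ)
  refine ⟨h, fun h0 => h𝔪 ?_⟩
  have hj1 : j (Submodule.Quotient.mk 1) = j 0 := by
    rw [← hφ, map_zero, ← h0]
    exact (hh _).symm
  rw [Ideal.eq_top_iff_one, ← Submodule.Quotient.mk_eq_zero]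
  exact hj hj1

end InjectiveHull

section FinitelyEmbedded

variable {R : Type u} [CommRing R]

theorem FinitelyEmbedded.of_injective {M N : Type u} [AddCommGroup M] [Module R M]
    [AddCommGroup N] [Module R N] (f : M →ₗ[R] N) (hf : Function.Injective f)
    (h : FinitelyEmbedded R N) : FinitelyEmbedded R M := by
  obtain ⟨E, hE, S, hS, hSfg, hess, g, hg⟩ := h
  exact ⟨E, hE, S, hS, hSfg, hess, g ∘ₗ f, hg.comp hf⟩

theorem FinitelyEmbedded.pi {ι : Type} [Finite ι] {M : ι → Type u} [∀ i, AddCommGroup (M i)]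
    [∀ i, Module R (M i)] (h : ∀ i, FinitelyEmbedded R (M i)) :
    FinitelyEmbedded R (∀ i, M i) := by
  choose E hE S hS hSfg hess f hf using h
  have := fun i => Module.Finite.iff_fg.mpr (hSfg i)
  have hpi : Submodule.pi Set.univ S ≤ range (piMap fun i => (S i).subtype) :=
    fun y hy => ⟨fun i => ⟨y i, hy i trivial⟩, rfl⟩
  exact ⟨.of R (∀ i, E i), inferInstance, range (piMap fun i => (S i).subtype), .range _,
    Module.Finite.iff_fg.mp inferInstance, isEssentialIn_top_iff.mp
      ((isEssentialIn_top_pi fun i => isEssentialIn_top_iff.mpr (hess i)).mono hpi),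
    piMap f, fun x y hxy => funext fun i => hf i (congrFun hxy i)⟩

theorem FinitelyEmbedded.linearMap {N E : Type u} [AddCommGroup N] [Module R N]
    [Module.Finite R N] [AddCommGroup E] [Module R E] (h : FinitelyEmbedded R E) :
    FinitelyEmbedded R (N →ₗ[R] E) := by
  obtain ⟨n, v, hv⟩ := Module.Finite.exists_fin (R := R) (M := N)
  exact (FinitelyEmbedded.pi fun _ : Fin n => h).of_injective
    (LinearMap.pi fun i => LinearMap.applyₗ (v i))
    fun f g hfg => LinearMap.ext_on_range hv fun i => congrFun hfg i

theorem exists_injective_finitelyEmbedded_extension (X : Type u) [AddCommGroup X] [Module R X]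
    [IsSemisimpleModule R X] [Module.Finite R X] : ∃ E : ModuleCat.{u} R,
      Module.Injective R E ∧ FinitelyEmbedded R E ∧ ∃ j : X →ₗ[R] E, Function.Injective j := by
  obtain ⟨E, hE, j, hj, hess⟩ := exists_injective_essential_extension (R := R) X
  exact ⟨E, hE, ⟨E, hE, range j, .range j, Module.Finite.iff_fg.mp inferInstance,
    isEssentialIn_top_iff.mp hess, LinearMap.id, Function.injective_id⟩, j, hj⟩

theorem ker_rTensor_mkQ_ker_curry_le {M N P : Type*} [AddCommGroup M] [Module R M]
    [AddCommGroup N] [Module R N] [AddCommGroup P] [Module R P] (h : M ⊗[R] N →ₗ[R] P) :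
    ker (rTensor N (ker (curry h)).mkQ) ≤ ker h := by
  have hfactor :
      lift ((ker (curry h)).liftQ (curry h) le_rfl) ∘ₗ rTensor N (ker (curry h)).mkQ = h :=
    ext' fun _ _ => rfl
  intro t ht
  rw [mem_ker, ← hfactor, comp_apply, mem_ker.mp ht, map_zero]

end FinitelyEmbedded

theorem exists_finitelyEmbedded_quotient (R : Type u) [CommRing R] (M N : Type u)
    [AddCommGroup M] [Module R M] [AddCommGroup N] [Module R N] [Module.Finite R N]
    (α : TensorProduct R M N) (hα : α ≠ 0) :
    ∃ K : Submodule R M, FinitelyEmbedded R (M ⧸ K) ∧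
      LinearMap.rTensor N K.mkQ α ≠ 0 := by
  obtain ⟨𝔪, h𝔪, hα𝔪⟩ := Ideal.exists_le_maximal _ ((Ideal.torsionOf_eq_top_iff R α).not.mpr hα)
  have : IsSimpleModule R (R ⧸ 𝔪) := isSimpleModule_iff_isCoatom.mpr (Ideal.isMaximal_def.mp h𝔪)
  obtain ⟨E, hE, hEfe, j, hj⟩ := exists_injective_finitelyEmbedded_extension (R := R) (R ⧸ 𝔪)
  obtain ⟨h, hhα⟩ := exists_linearMap_apply_ne_zero hα𝔪 h𝔪.ne_top hj
  refine ⟨ker (curry h), (hEfe.linearMap (N := N)).of_injective _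
    (ker_eq_bot.mp (ker_liftQ_eq_bot' _ (curry h) rfl)),
    fun h0 => hhα (ker_rTensor_mkQ_ker_curry_le h h0)⟩
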